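/- Assume κ is UD-self-dual, 𝗊² : P → ℂ satisfies the Kerov condition with parameter t, and t ∉ {0, −1, −2, …}. Define M_n(λ) := (dim λ)² (∏_{□∈λ} 𝗊²(□)) / (n!(t)_n) for λ ∈ 𝔾_n, where (t)_n := t(t+1)⋯(t+n−1). Then: (a) Σ_{λ∈𝔾_n} M_n(λ) = 1 for every n ≥ 0; and (b) (coherency) for every n ≥ 0 and every λ ∈ 𝔾_n, Σ_{ν : ν ↘ λ} M_{n+1}(ν) · κ(λ,ν) dim λ / dim ν = M_n(λ). -/

import Mathlib

/-!
Write `D f (λ) = Σ_{ν ↘ λ} κ(λ,ν) 𝗊²(ν∖λ) f(ν)`. Everything rests on the eigen-relation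
`D dim = (n+1)(n+t) dim` on `𝔾_n`, proved by induction on `n`: expanding `dim ν` over the lower
covers of `ν`, the term `ρ = λ` gives `Σ_{ν ↘ λ} κ(λ,ν)² 𝗊²(ν∖λ) dim λ`, while the terms `ρ ≠ λ`
correspond, through `ν = ρ ∪ λ` and `μ = ρ ∩ λ`, to the quadrangles below `λ`; UD-self-duality
identifies their weights, so they sum to `Σ_{μ ↗ λ} κ(μ,λ) ((D dim)(μ) − κ(μ,λ) 𝗊²(λ∖μ) dim λ)`.
The induction hypothesis and the Kerov condition then give `(2n + t + n(n−1+t)) dim λ`.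

Double counting the edges between `𝔾_n` and `𝔾_{n+1}` turns the eigen-relation into
`Σ_{𝔾_{n+1}} dim² ∏𝗊² = (n+1)(n+t) Σ_{𝔾_n} dim² ∏𝗊²`, so the total mass of `M_n` is
`n! (t)_n / (n! (t)_n) = 1`; coherency is the eigen-relation divided by `(n+1)! (t)_{n+1}`.
-/

open scoped BigOperators Classical

namespace IdealGraph

variable {P : Type*} [PartialOrder P]

/-- A finite order ideal of the poset `P`, encoded as a down-closed `Finset`. -/
def IsIdealF (s : Finset P) : Prop := ∀ ⦃x⦄, x ∈ s → ∀ ⦃y⦄, y ≤ x → y ∈ s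

/-- The vertex set of the branching graph of ideals `𝔾 = J(P)`. -/
abbrev G (P : Type*) [PartialOrder P] := {s : Finset P // IsIdealF s}

/-- The `n`-th level `𝔾_n` of the branching graph. -/
abbrev Lvl (P : Type*) [PartialOrder P] (n : ℕ) := {s : Finset P // IsIdealF s ∧ s.card = n}

/-- `CoversF μ l` : `μ ↗ l` is an edge of the branching graph of ideals. -/
def CoversF (μ l : Finset P) : Prop :=
  IsIdealF μ ∧ IsIdealF l ∧ μ ⊆ l ∧ l.card = μ.card + 1

/-- All levels `𝔾_n` of the graph are finite. -/
def LevelsFinite (P : Type*) [PartialOrder P] : Prop :=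
  ∀ n : ℕ, {s : Finset P | IsIdealF s ∧ s.card = n}.Finite

/-- An edge multiplicity function is (strictly) positive on all edges. -/
def EdgePositive (κ : Finset P → Finset P → ℝ) : Prop :=
  ∀ μ l, CoversF μ l → 0 < κ μ l

/-- UD-self-duality of a multiplicity function: for every quadrangle `μ ρ ν λ`. -/
def UDSelfDual (κ : Finset P → Finset P → ℝ) : Prop :=
  ∀ μ ρ l ν : Finset P, CoversF μ ρ → CoversF ρ ν → CoversF μ l → CoversF l ν →
    ρ ≠ l → κ μ l * κ μ ρ = κ l ν * κ ρ ν

/-- The value of a function `q : P → R` on the box `l ∖ μ` of an edge `μ ↗ l`. -/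
noncomputable def bx {R : Type*} [AddCommMonoid R] (q : P → R) (μ l : Finset P) : R :=
  ∑ x ∈ l \ μ, q x

/-- The Kerov condition with parameter `t` for the function `q2 = 𝗊²`. -/
def KerovCond (κ : Finset P → Finset P → ℝ) (q2 : P → ℂ) (t : ℂ) : Prop :=
  ∀ l : Finset P, IsIdealF l →
    (∑' ν : {ν : Finset P // CoversF l ν}, (κ l ν.1 : ℂ) ^ 2 * bx q2 l ν.1) -
      (∑' μ : {μ : Finset P // CoversF μ l}, (κ μ.1 l : ℂ) ^ 2 * bx q2 μ.1 l)
      = 2 * (l.card : ℂ) + t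

/-- Weighted number of saturated chains of length `n` from the ideal `μ` up to the ideal `l`. -/
noncomputable def dimRel (κ : Finset P → Finset P → ℝ) : ℕ → Finset P → Finset P → ℝ
  | 0, μ, l => if μ = l then 1 else 0
  | n + 1, μ, l =>
      ∑ x ∈ l, if CoversF (l.erase x) l ∧ μ ⊆ l.erase x
        then κ (l.erase x) l * dimRel κ n μ (l.erase x) else 0

/-- Relative dimension `dim(μ, l)`. -/
noncomputable def dimI (κ : Finset P → Finset P → ℝ) (μ l : Finset P) : ℝ :=
  dimRel κ (l.card - μ.card) μ l

/-- Dimension `dim l = dim(∅, l)`. -/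
noncomputable def dimT (κ : Finset P → Finset P → ℝ) (l : Finset P) : ℝ :=
  dimI κ ∅ l

/-- The relative dimension function `P*_μ`. -/
noncomputable def Pstar (κ : Finset P → Finset P → ℝ) (μ l : Finset P) : ℝ :=
  (l.card.descFactorial μ.card : ℝ) * dimI κ μ l / dimT κ l

/-- The mixed measure `M_ξ`. -/
noncomputable def Mxi (κ : Finset P → Finset P → ℝ) (q : P → ℝ) (t ξ : ℝ) (l : Finset P) : ℝ :=
  (1 - ξ) ^ t * ξ ^ l.card * (dimT κ l / (Nat.factorial l.card : ℝ)) ^ 2 * ∏ x ∈ l, q x ^ 2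

/-- The coherent measure `M_n(l)` (for `n = |l|`). -/
noncomputable def Mcoh (κ : Finset P → Finset P → ℝ) (q : P → ℝ) (t : ℝ) (l : Finset P) : ℝ :=
  dimT κ l ^ 2 * (∏ x ∈ l, q x ^ 2) /
    ((Nat.factorial l.card : ℝ) * Polynomial.eval t (ascPochhammer ℝ l.card))

/-- The jump rates `Q(l, ρ)` of the Markov jump dynamics. -/
noncomputable def Qrate (κ : Finset P → Finset P → ℝ) (q : P → ℝ) (t ξ : ℝ)
    (l ρ : Finset P) : ℝ :=
  if CoversF ρ l then (1 - ξ)⁻¹ * l.card * (κ ρ l * dimT κ ρ / dimT κ l)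
  else if CoversF l ρ then
    (1 - ξ)⁻¹ * (ξ * ((l.card : ℝ) + t)) *
      ((Mcoh κ q t ρ / Mcoh κ q t l) * (κ l ρ * dimT κ l / dimT κ ρ))
  else if ρ = l then -((1 - ξ)⁻¹ * ((l.card : ℝ) + ξ * ((l.card : ℝ) + t)))
  else 0

/-- The function `𝔐_l`. -/
noncomputable def Mfrak (κ : Finset P → Finset P → ℝ) (q : P → ℝ) (ξ : ℝ)
    (l ν : Finset P) : ℝ :=
  ∑ μ ∈ l.powerset.filter (fun s => IsIdealF s),
    (ξ / (ξ - 1)) ^ (l.card - μ.card) *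
      (dimI κ μ l / (Nat.factorial (l.card - μ.card) : ℝ)) *
      (∏ x ∈ l \ μ, q x ^ 2) * Pstar κ μ ν

/-- The operator `U` built from `κ` and `q`. -/
noncomputable def Uop (κ : Finset P → Finset P → ℝ) (q : P → ℂ) (f : Finset P → ℂ) :
    Finset P → ℂ :=
  fun l => ∑' μ : {μ : Finset P // CoversF μ l}, (κ μ.1 l : ℂ) * bx q μ.1 l * f μ.1

/-- The operator `D` built from `κ` and `q`. -/
noncomputable def Dop (κ : Finset P → Finset P → ℝ) (q : P → ℂ) (f : Finset P → ℂ) :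
    Finset P → ℂ :=
  fun l => ∑' ν : {ν : Finset P // CoversF l ν}, (κ l ν.1 : ℂ) * bx q l ν.1 * f ν.1

/-- The standard basis vector `δ_l`. -/
noncomputable def delta (l : Finset P) : Finset P → ℂ := fun ρ => if ρ = l then 1 else 0


/-- The (possibly complex-valued) coherent measure `M_n(l)` built from a Kerov triplet. -/
noncomputable def McohC {P : Type*} [PartialOrder P]
    (κ : Finset P → Finset P → ℝ) (q2 : P → ℂ) (t : ℂ) (l : Finset P) : ℂ :=
  (dimT κ l : ℂ) ^ 2 * (∏ x ∈ l, q2 x) /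
    ((Nat.factorial l.card : ℂ) * Polynomial.eval t (ascPochhammer ℂ l.card))

open Finset

lemma isIdealF_empty : IsIdealF (∅ : Finset P) :=
  fun x hx => absurd hx (notMem_empty x)

lemma IsIdealF.inter {s s' : Finset P} (hs : IsIdealF s) (hs' : IsIdealF s') :
    IsIdealF (s ∩ s') :=
  fun _ hx _ hy => mem_inter.2 ⟨hs (mem_inter.1 hx).1 hy, hs' (mem_inter.1 hx).2 hy⟩

lemma IsIdealF.union {s s' : Finset P} (hs : IsIdealF s) (hs' : IsIdealF s') :
    IsIdealF (s ∪ s') :=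
  fun _ hx _ hy => (mem_union.1 hx).elim (fun h => mem_union_left _ (hs h hy))
    (fun h => mem_union_right _ (hs' h hy))

namespace CoversF

variable {μ l ρ ν : Finset P}

lemma exists_eq_insert (h : CoversF μ l) : ∃ x ∉ μ, l = insert x μ := by
  obtain ⟨x, hx⟩ : ∃ x, l \ μ = {x} :=
    card_eq_one.1 (by rw [card_sdiff_of_subset h.2.2.1, h.2.2.2]; omega)
  have hxl : x ∈ l \ μ := hx ▸ mem_singleton_self x
  exact ⟨x, (mem_sdiff.1 hxl).2, by rw [insert_eq, ← hx, sdiff_union_of_subset h.2.2.1]⟩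

lemma prod_eq_mul_bx {R : Type*} [CommSemiring R] (h : CoversF μ l) (q : P → R) :
    ∏ y ∈ l, q y = (∏ y ∈ μ, q y) * bx q μ l := by
  obtain ⟨x, hx, rfl⟩ := h.exists_eq_insert
  rw [prod_insert hx, bx, insert_sdiff_of_notMem _ hx, sdiff_self, bot_eq_empty, insert_empty,
    sum_singleton, mul_comm]

lemma union_eq_and_inter_coversF (hl : CoversF l ν) (hρ : CoversF ρ ν) (hne : ρ ≠ l) :
    ρ ∪ l = ν ∧ CoversF (ρ ∩ l) ρ ∧ CoversF (ρ ∩ l) l := by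
  have hcl := hl.2.2.2
  have hcρ := hρ.2.2.2
  have hρl : ¬ρ ⊆ l := fun h => hne (eq_of_subset_of_card_le h (by omega))
  have hlt : l.card < (ρ ∪ l).card :=
    card_lt_card ⟨subset_union_right, fun h => hρl (subset_union_left.trans h)⟩
  have hunion : ρ ∪ l = ν :=
    eq_of_subset_of_card_le (union_subset hρ.2.2.1 hl.2.2.1) (by omega)
  have hcard := card_union_add_card_inter ρ l
  rw [hunion] at hcard
  have hid := hρ.1.inter hl.1
  exact ⟨hunion, ⟨hid, hρ.1, inter_subset_left, by omega⟩,
    ⟨hid, hl.1, inter_subset_right, by omega⟩⟩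

lemma inter_eq_and_coversF_union (hl : CoversF μ l) (hρ : CoversF μ ρ) (hne : ρ ≠ l) :
    ρ ∩ l = μ ∧ CoversF l (ρ ∪ l) ∧ CoversF ρ (ρ ∪ l) := by
  have hcl := hl.2.2.2
  have hcρ := hρ.2.2.2
  have hρl : ¬ρ ⊆ l := fun h => hne (eq_of_subset_of_card_le h (by omega))
  have hlt : (ρ ∩ l).card < ρ.card :=
    card_lt_card ⟨inter_subset_left, fun h => hρl (h.trans inter_subset_right)⟩
  have hinter : ρ ∩ l = μ :=
    (eq_of_subset_of_card_le (subset_inter hρ.2.2.1 hl.2.2.1) (by omega)).symm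
  have hcard := card_union_add_card_inter ρ l
  rw [hinter] at hcard
  have hid := hρ.2.1.union hl.2.1
  exact ⟨hinter, ⟨hl.2.1, hid, subset_union_right, by omega⟩,
    ⟨hρ.2.1, hid, subset_union_left, by omega⟩⟩

end CoversF

lemma tsum_subtype_eq_sum {α M : Type*} [AddCommMonoid M] [TopologicalSpace M] {p : α → Prop}
    {s : Finset α} (hs : ∀ x, p x ↔ x ∈ s) (f : α → M) :
    ∑' x : {x // p x}, f x = ∑ x ∈ s, f x :=
  ((Equiv.subtypeEquivRight hs).tsum_eq (fun x : {x // x ∈ s} => f x)).trans (s.tsum_subtype f)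

lemma factorial_mul_ascPochhammer_succ_eval {R : Type*} [CommSemiring R] (t : R) (n : ℕ) :
    ((n + 1).factorial : R) * (ascPochhammer R (n + 1)).eval t
      = (n + 1) * (n + t) * (n.factorial * (ascPochhammer R n).eval t) := by
  rw [Nat.factorial_succ, ascPochhammer_succ_eval]
  push_cast
  ring

lemma ascPochhammer_eval_ne_zero {R : Type*} [CommRing R] [IsDomain R] {t : R}
    (ht : ∀ k : ℕ, t ≠ -(k : R)) (n : ℕ) : (ascPochhammer R n).eval t ≠ 0 := by
  rw [Ne, ascPochhammer_eval_eq_zero_iff]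
  rintro ⟨k, -, hk⟩
  exact ht k (by rw [hk, neg_neg])

section Covers

variable (hLF : LevelsFinite P)

noncomputable def level (n : ℕ) : Finset (Finset P) := (hLF n).toFinset

noncomputable def upCovers (l : Finset P) : Finset (Finset P) :=
  (level hLF (l.card + 1)).filter (CoversF l)

noncomputable def downCovers (l : Finset P) : Finset (Finset P) :=
  l.powerset.filter (CoversF · l)

variable {hLF}

lemma mem_level {n : ℕ} {l : Finset P} : l ∈ level hLF n ↔ IsIdealF l ∧ l.card = n :=
  Set.Finite.mem_toFinset _

lemma mem_upCovers {l ν : Finset P} : ν ∈ upCovers hLF l ↔ CoversF l ν := by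
  rw [upCovers, mem_filter, mem_level]
  exact ⟨And.right, fun h => ⟨⟨h.2.1, h.2.2.2⟩, h⟩⟩

lemma mem_downCovers {l μ : Finset P} : μ ∈ downCovers l ↔ CoversF μ l := by
  rw [downCovers, mem_filter, mem_powerset]
  exact ⟨And.right, fun h => ⟨h.2.2.1, h⟩⟩

lemma level_zero : level hLF 0 = {∅} := by
  ext l
  rw [mem_level, mem_singleton, card_eq_zero]
  exact ⟨And.right, fun h => ⟨h ▸ isIdealF_empty, h⟩⟩

end Covers

variable {κ : Finset P → Finset P → ℝ} {q2 : P → ℂ} {t : ℂ}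

lemma Dop_eq_sum_upCovers (hLF : LevelsFinite P) (q : P → ℂ) (f : Finset P → ℂ)
    (l : Finset P) : Dop κ q f l = ∑ ν ∈ upCovers hLF l, (κ l ν : ℂ) * bx q l ν * f ν :=
  tsum_subtype_eq_sum (fun _ => mem_upCovers.symm) (fun ν => (κ l ν : ℂ) * bx q l ν * f ν)

lemma KerovCond.sum_upCovers_sub_sum_downCovers (hK : KerovCond κ q2 t) (hLF : LevelsFinite P)
    {l : Finset P} (hl : IsIdealF l) :
    ∑ ν ∈ upCovers hLF l, (κ l ν : ℂ) ^ 2 * bx q2 l ν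
      - ∑ μ ∈ downCovers l, (κ μ l : ℂ) ^ 2 * bx q2 μ l = 2 * l.card + t := by
  rw [← hK l hl,
    tsum_subtype_eq_sum (fun _ => mem_upCovers.symm) (fun ν => (κ l ν : ℂ) ^ 2 * bx q2 l ν),
    tsum_subtype_eq_sum (fun _ => mem_downCovers.symm) (fun μ => (κ μ l : ℂ) ^ 2 * bx q2 μ l)]

section Dimension

variable (κ) in
lemma dimT_empty : dimT κ ∅ = 1 := by
  simp [dimT, dimI, dimRel]

variable (κ) in
lemma dimT_eq_sum_downCovers {ν : Finset P} (hν : ν.Nonempty) :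
    dimT κ ν = ∑ μ ∈ downCovers ν, κ μ ν * dimT κ μ := by
  obtain ⟨m, hm⟩ : ∃ m, ν.card = m + 1 := Nat.exists_eq_succ_of_ne_zero hν.card_pos.ne'
  have hdim : ∀ x ∈ ν, dimRel κ m ∅ (ν.erase x) = dimT κ (ν.erase x) := fun x hx => by
    rw [dimT, dimI, card_erase_of_mem hx, hm, card_empty]; rfl
  rw [dimT, dimI, card_empty, Nat.sub_zero, hm, dimRel]
  simp only [empty_subset, and_true]
  rw [← sum_filter]
  refine sum_bij (fun x _ => ν.erase x) (fun x hx => mem_downCovers.2 (mem_filter.1 hx).2)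
    (fun x hx y hy hxy => erase_injOn ν (mem_filter.1 hx).1 (mem_filter.1 hy).1 hxy)
    (fun μ hμ => ?_) (fun x hx => by rw [hdim x (mem_filter.1 hx).1])
  obtain ⟨x, hx, rfl⟩ := (mem_downCovers.1 hμ).exists_eq_insert
  refine ⟨x, mem_filter.2 ⟨mem_insert_self x μ, ?_⟩, erase_insert hx⟩
  rw [erase_insert hx]
  exact mem_downCovers.1 hμ

lemma dimT_eq_add_sum_erase {l ν : Finset P} (h : CoversF l ν) :
    (dimT κ ν : ℂ)
      = κ l ν * dimT κ l + ∑ ρ ∈ (downCovers ν).erase l, (κ ρ ν : ℂ) * dimT κ ρ := by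
  rw [dimT_eq_sum_downCovers κ (card_pos.1 (by rw [h.2.2.2]; omega)),
    ← add_sum_erase _ _ (mem_downCovers.2 h)]
  push_cast
  rfl

lemma card_mul_sum_downCovers (l : Finset P) :
    (l.card : ℂ) * ∑ μ ∈ downCovers l, (κ μ l : ℂ) * dimT κ μ = l.card * dimT κ l := by
  rcases l.eq_empty_or_nonempty with rfl | hne
  · simp
  · rw [dimT_eq_sum_downCovers κ hne]
    push_cast
    rfl

end Dimension

/-- Both sides run over the quadrangles `ρ ∩ l ↗ ρ, l ↗ ρ ∪ l` with `ρ ≠ l`; UD-self-duality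
matches their weights. -/
lemma UDSelfDual.sum_upCovers_sum_downCovers_erase {hLF : LevelsFinite P} (hUD : UDSelfDual κ)
    (q : P → ℂ) (f : Finset P → ℂ) (l : Finset P) :
    ∑ ν ∈ upCovers hLF l, ∑ ρ ∈ (downCovers ν).erase l, (κ l ν : ℂ) * κ ρ ν * bx q l ν * f ρ
      = ∑ μ ∈ downCovers l, ∑ ρ ∈ (upCovers hLF μ).erase l,
          (κ μ l : ℂ) * κ μ ρ * bx q μ ρ * f ρ := by
  rw [sum_sigma', sum_sigma']
  have hup : ∀ x ∈ (upCovers hLF l).sigma fun ν => (downCovers ν).erase l,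
      x.2 ∪ l = x.1 ∧ CoversF (x.2 ∩ l) x.2 ∧ CoversF (x.2 ∩ l) l ∧ CoversF x.2 x.1 ∧ x.2 ≠ l := by
    rintro ⟨ν, ρ⟩ hx
    simp only [mem_sigma, mem_erase, mem_upCovers, mem_downCovers] at hx
    obtain ⟨hν, hρ, hl⟩ := hx.1.union_eq_and_inter_coversF hx.2.2 hx.2.1
    exact ⟨hν, hρ, hl, hx.2.2, hx.2.1⟩
  have hdown : ∀ y ∈ (downCovers l).sigma fun μ => (upCovers hLF μ).erase l,
      y.2 ∩ l = y.1 ∧ CoversF l (y.2 ∪ l) ∧ CoversF y.2 (y.2 ∪ l) ∧ CoversF y.1 y.2 ∧ y.2 ≠ l := by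
    rintro ⟨μ, ρ⟩ hy
    simp only [mem_sigma, mem_erase, mem_upCovers, mem_downCovers] at hy
    obtain ⟨hμ, hl, hρ⟩ := hy.1.inter_eq_and_coversF_union hy.2.2 hy.2.1
    exact ⟨hμ, hl, hρ, hy.2.2, hy.2.1⟩
  refine sum_bij' (fun x _ => ⟨x.2 ∩ l, x.2⟩) (fun y _ => ⟨y.2 ∪ l, y.2⟩) (fun x hx => ?_)
    (fun y hy => ?_) (fun x hx => ?_) (fun y hy => ?_) (fun x hx => ?_)
  · obtain ⟨-, hρ, hl, -, hne⟩ := hup x hx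
    simp only [mem_sigma, mem_erase, mem_upCovers, mem_downCovers]
    exact ⟨hl, hne, hρ⟩
  · obtain ⟨-, hl, hρ, -, hne⟩ := hdown y hy
    simp only [mem_sigma, mem_erase, mem_upCovers, mem_downCovers]
    exact ⟨hl, hne, hρ⟩
  · rw [(hup x hx).1]
  · rw [(hdown y hy).1]
  · obtain ⟨ν, ρ⟩ := x
    obtain ⟨hν, hρ, hl, hρν, hne⟩ := hup _ hx
    dsimp only at hν hρ hl hρν hne ⊢
    subst hν
    have hbx : bx q l (ρ ∪ l) = bx q (ρ ∩ l) ρ := by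
      rw [bx, bx, union_sdiff_right, sdiff_inter_self_left]
    have hquad : (κ (ρ ∩ l) l : ℂ) * κ (ρ ∩ l) ρ = κ l (ρ ∪ l) * κ ρ (ρ ∪ l) := by
      exact_mod_cast hUD _ _ _ _ hρ hρν hl (mem_upCovers.1 (mem_sigma.1 hx).1) hne
    rw [hbx, ← hquad]

lemma sum_upCovers_mul_dimT_eq (hLF : LevelsFinite P) (q : P → ℂ) (l : Finset P) :
    ∑ ν ∈ upCovers hLF l, (κ l ν : ℂ) * bx q l ν * dimT κ ν
      = (∑ ν ∈ upCovers hLF l, (κ l ν : ℂ) ^ 2 * bx q l ν) * dimT κ l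
        + ∑ ν ∈ upCovers hLF l, ∑ ρ ∈ (downCovers ν).erase l,
            (κ l ν : ℂ) * κ ρ ν * bx q l ν * dimT κ ρ := by
  rw [sum_mul, ← sum_add_distrib]
  refine sum_congr rfl fun ν hν => ?_
  rw [dimT_eq_add_sum_erase (mem_upCovers.1 hν), mul_add, mul_sum]
  congr 1
  · ring
  · exact sum_congr rfl fun ρ _ => by ring

theorem Dop_dimT_eq (hLF : LevelsFinite P) (hUD : UDSelfDual κ) (hK : KerovCond κ q2 t)
    {l : Finset P} (hl : IsIdealF l) :
    Dop κ q2 (fun ν => (dimT κ ν : ℂ)) l = (l.card + 1) * (l.card + t) * dimT κ l := by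
  induction' hn : l.card using Nat.strong_induction_on with n ih generalizing l
  have hlower : ∀ μ ∈ downCovers l, ∑ ρ ∈ (upCovers hLF μ).erase l,
      (κ μ ρ : ℂ) * bx q2 μ ρ * dimT κ ρ
        = n * (n - 1 + t) * dimT κ μ - κ μ l * bx q2 μ l * dimT κ l := by
    intro μ hμ
    have hcov := mem_downCovers.1 hμ
    have hcard : (μ.card : ℂ) + 1 = n := by rw [← hn, hcov.2.2.2]; push_cast; rfl
    have hIH := ih μ.card (by rw [← hn, hcov.2.2.2]; omega) hcov.1 rfl
    rw [Dop_eq_sum_upCovers hLF, ← add_sum_erase _ _ (mem_upCovers.2 hcov)] at hIH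
    rw [← hcard]
    linear_combination hIH
  have hcross : ∑ μ ∈ downCovers l, ∑ ρ ∈ (upCovers hLF μ).erase l,
        (κ μ l : ℂ) * κ μ ρ * bx q2 μ ρ * dimT κ ρ
      = n * (n - 1 + t) * ∑ μ ∈ downCovers l, (κ μ l : ℂ) * dimT κ μ
        - (∑ μ ∈ downCovers l, (κ μ l : ℂ) ^ 2 * bx q2 μ l) * dimT κ l := by
    rw [mul_sum, sum_mul, ← sum_sub_distrib]
    refine sum_congr rfl fun μ hμ => ?_
    have hfactor : ∑ ρ ∈ (upCovers hLF μ).erase l, (κ μ l : ℂ) * κ μ ρ * bx q2 μ ρ * dimT κ ρ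
        = κ μ l * ∑ ρ ∈ (upCovers hLF μ).erase l, (κ μ ρ : ℂ) * bx q2 μ ρ * dimT κ ρ := by
      rw [mul_sum]
      exact sum_congr rfl fun _ _ => by ring
    rw [hfactor, hlower μ hμ]
    ring
  have hker := hK.sum_upCovers_sub_sum_downCovers hLF hl
  have hdown := card_mul_sum_downCovers (κ := κ) l
  rw [hn] at hker hdown
  rw [Dop_eq_sum_upCovers hLF, sum_upCovers_mul_dimT_eq,
    hUD.sum_upCovers_sum_downCovers_erase q2 (fun ρ => (dimT κ ρ : ℂ)) l, hcross]
  linear_combination (dimT κ l : ℂ) * hker + (n - 1 + t) * hdown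

theorem sum_level_dimT_sq_mul_prod (hLF : LevelsFinite P) (hUD : UDSelfDual κ)
    (hK : KerovCond κ q2 t) (n : ℕ) :
    ∑ l ∈ level hLF n, (dimT κ l : ℂ) ^ 2 * ∏ x ∈ l, q2 x
      = n.factorial * (ascPochhammer ℂ n).eval t := by
  induction n with
  | zero => simp [level_zero, dimT_empty]
  | succ n ih =>
    have hdouble : ∑ ν ∈ level hLF (n + 1), (dimT κ ν : ℂ) ^ 2 * ∏ x ∈ ν, q2 x
        = ∑ μ ∈ level hLF n, ∑ ν ∈ upCovers hLF μ,
            (κ μ ν : ℂ) * dimT κ μ * (dimT κ ν * ∏ x ∈ ν, q2 x) := by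
      rw [← sum_comm' (t := downCovers) (s' := upCovers hLF)]
      · refine sum_congr rfl fun ν hν => ?_
        rw [sq, mul_assoc, ← sum_mul]
        congr 1
        rw [dimT_eq_sum_downCovers κ (card_pos.1 (by rw [(mem_level.1 hν).2]; omega))]
        push_cast
        rfl
      · intro ν μ
        rw [mem_level, mem_level, mem_downCovers, mem_upCovers]
        exact ⟨fun ⟨_, h⟩ => ⟨h, h.1, by have := h.2.2.2; omega⟩,
          fun ⟨h, _⟩ => ⟨⟨h.2.1, by have := h.2.2.2; omega⟩, h⟩⟩
    rw [hdouble, factorial_mul_ascPochhammer_succ_eval, ← ih, mul_sum]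
    refine sum_congr rfl fun μ hμ => ?_
    obtain ⟨hμid, rfl⟩ := mem_level.1 hμ
    have hD := Dop_dimT_eq hLF hUD hK hμid
    rw [Dop_eq_sum_upCovers hLF] at hD
    calc ∑ ν ∈ upCovers hLF μ, (κ μ ν : ℂ) * dimT κ μ * (dimT κ ν * ∏ x ∈ ν, q2 x)
        = dimT κ μ * (∏ x ∈ μ, q2 x)
            * ∑ ν ∈ upCovers hLF μ, (κ μ ν : ℂ) * bx q2 μ ν * dimT κ ν := by
          rw [mul_sum]
          exact sum_congr rfl fun ν hν => by rw [(mem_upCovers.1 hν).prod_eq_mul_bx]; ring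
      _ = _ := by rw [hD]; ring

lemma McohC_mul_of_coversF {l ν : Finset P} (h : CoversF l ν) :
    McohC κ q2 t ν * ((κ l ν * dimT κ l / dimT κ ν : ℝ) : ℂ)
      = dimT κ l * (∏ x ∈ l, q2 x) * (κ l ν * bx q2 l ν * dimT κ ν)
        / ((l.card + 1).factorial * (ascPochhammer ℂ (l.card + 1)).eval t) := by
  rw [McohC, h.2.2.2, h.prod_eq_mul_bx]
  push_cast
  rcases eq_or_ne (dimT κ ν : ℂ) 0 with hd | hd
  · simp [hd]
  · field_simp

theorem statement5_general {P : Type*} [PartialOrder P]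
    (κ : Finset P → Finset P → ℝ) (q2 : P → ℂ) (t : ℂ)
    (hLF : LevelsFinite P) (hUD : UDSelfDual κ)
    (hK : KerovCond κ q2 t) (ht : ∀ k : ℕ, t ≠ -(k : ℂ)) :
    (∀ n : ℕ, ∑' l : Lvl P n, McohC κ q2 t l.1 = 1) ∧
    (∀ n : ℕ, ∀ l : Finset P, IsIdealF l → l.card = n →
      ∑' ν : {ν : Finset P // CoversF l ν},
          McohC κ q2 t ν.1 * ((κ l ν.1 * dimT κ l / dimT κ ν.1 : ℝ) : ℂ)
        = McohC κ q2 t l) := by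
  have hZ : ∀ n : ℕ, (n.factorial : ℂ) * (ascPochhammer ℂ n).eval t ≠ 0 := fun n =>
    mul_ne_zero (Nat.cast_ne_zero.2 n.factorial_ne_zero) (ascPochhammer_eval_ne_zero ht n)
  refine ⟨fun n => ?_, fun _ l hl _ => ?_⟩
  · have hM : ∀ l ∈ level hLF n, McohC κ q2 t l
        = (dimT κ l : ℂ) ^ 2 * (∏ x ∈ l, q2 x) / (n.factorial * (ascPochhammer ℂ n).eval t) :=
      fun l hl => by rw [McohC, (mem_level.1 hl).2]
    rw [tsum_subtype_eq_sum (fun _ => (mem_level (hLF := hLF)).symm) (McohC κ q2 t),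
      sum_congr rfl hM, ← sum_div, sum_level_dimT_sq_mul_prod hLF hUD hK n, div_self (hZ n)]
  · have hstep := hZ (l.card + 1)
    rw [factorial_mul_ascPochhammer_succ_eval] at hstep
    obtain ⟨hsucc, hshift⟩ := mul_ne_zero_iff.1 (left_ne_zero_of_mul hstep)
    rw [tsum_subtype_eq_sum (fun _ => (mem_upCovers (hLF := hLF)).symm)
        (fun ν => McohC κ q2 t ν * ((κ l ν * dimT κ l / dimT κ ν : ℝ) : ℂ)),
      sum_congr rfl fun ν hν => McohC_mul_of_coversF (mem_upCovers.1 hν), ← sum_div, ← mul_sum,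
      ← Dop_eq_sum_upCovers hLF, Dop_dimT_eq hLF hUD hK hl, McohC,
      factorial_mul_ascPochhammer_succ_eval]
    field_simp

/-- the measures `M_n` are probability measures (total mass `1`) and form a
coherent system: `Σ_{ν ↘ λ} M_{n+1}(ν) κ(λ,ν) dim λ / dim ν = M_n(λ)`. -/
theorem statement5 {P : Type*} [PartialOrder P]
    (κ : Finset P → Finset P → ℝ) (q2 : P → ℂ) (t : ℂ)
    (hκ : EdgePositive κ) (hLF : LevelsFinite P) (hUD : UDSelfDual κ)
    (hK : KerovCond κ q2 t) (ht : ∀ k : ℕ, t ≠ -(k : ℂ)) :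
    (∀ n : ℕ, ∑' l : Lvl P n, McohC κ q2 t l.1 = 1) ∧
    (∀ n : ℕ, ∀ l : Finset P, IsIdealF l → l.card = n →
      ∑' ν : {ν : Finset P // CoversF l ν},
          McohC κ q2 t ν.1 * ((κ l ν.1 * dimT κ l / dimT κ ν.1 : ℝ) : ℂ)
        = McohC κ q2 t l) :=
  statement5_general κ q2 t hLF hUD hK ht

end IdealGraph
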